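/- arXiv:1402.6896 — 3 statements merged into one kernel-verified Lean document; each statement's English description precedes it below -/
import Mathlib

section
/- Let G be a Herglotz vector field in the class ℳₙ. Then there exists a set E_G ⊆ [0,∞) of Lebesgue measure zero such that for every t ∈ (0,∞)∖E_G the convergence (1/ε)∫_{t−ε}^{t} G(z,τ)dτ → G(z,t) as ε → 0⁺ holds locally uniformly with respect to z ∈ 𝔹ⁿ. -/
open Metric MeasureTheory Filter Topology Set

noncomputable section

/-- `ℂⁿ` with the Euclidean norm. -/
abbrev En (n : ℕ) := EuclideanSpace ℂ (Fin n)

/-- The open unit ball `𝔹ⁿ ⊆ ℂⁿ`. -/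
def 𝔹 (n : ℕ) : Set (En n) := Metric.ball 0 1

/-- Holomorphic maps `𝔹ⁿ → ℂⁿ` (represented by global functions, holomorphic on the ball). -/
def Hol (n : ℕ) : Set (En n → En n) := {f | DifferentiableOn ℂ f (𝔹 n)}

/-- The class `ℳₙ`: holomorphic `h` with `h 0 = 0`, `dh₀ = -id` and `Re ⟪h z, z⟫ ≤ 0` on `𝔹ⁿ`. -/
def ClassM (n : ℕ) : Set (En n → En n) :=
  {h | DifferentiableOn ℂ h (𝔹 n) ∧ h 0 = 0 ∧
    fderiv ℂ h 0 = -(1 : En n →L[ℂ] En n) ∧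
    ∀ z ∈ 𝔹 n, (inner ℂ (h z) z : ℂ).re ≤ 0}

/-- Herglotz vector field in the class `ℳₙ`. -/
def IsHerglotz (n : ℕ) (G : ℝ → En n → En n) : Prop :=
  (∀ z ∈ 𝔹 n, StronglyMeasurable fun t : ℝ => G t z) ∧
  (∀ᵐ t ∂(volume.restrict (Ici (0 : ℝ))), G t ∈ ClassM n)

/-- The evolution family `φ_{s,t}` generated by `G` (integral form of the Loewner ODE,
equivalent to local absolute continuity plus the ODE a.e.). -/
def IsEvolution (n : ℕ) (G : ℝ → En n → En n) (φ : ℝ → ℝ → En n → En n) : Prop :=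
  ∀ s : ℝ, 0 ≤ s →
    (∀ t : ℝ, s ≤ t → DifferentiableOn ℂ (φ s t) (𝔹 n)) ∧
    ∀ z ∈ 𝔹 n,
      (∀ t : ℝ, s ≤ t → φ s t z ∈ 𝔹 n) ∧
      (∀ t : ℝ, s ≤ t → φ s t z = z + ∫ τ in s..t, G τ (φ s τ z))

/-- `f = lim_{t→∞} eᵗ φ_{s,t}` locally uniformly on the ball. -/
def IsLoewnerLimit (n : ℕ) (φ : ℝ → ℝ → En n → En n) (s : ℝ) (f : En n → En n) : Prop :=
  TendstoLocallyUniformlyOn (fun t : ℝ => fun z => Real.exp t • φ s t z) f atTop (𝔹 n)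

/-- The class `𝒮ₙ⁰` of maps with parametric representation. -/
def S0 (n : ℕ) : Set (En n → En n) :=
  {f | ∃ G φ, IsHerglotz n G ∧ IsEvolution n G φ ∧ IsLoewnerLimit n φ 0 f}

/-- `T` is a regular point of `G`: the backward averages of `G(·,τ)` converge to `G(·,T)`
locally uniformly on the ball. -/
def RegularPoint (n : ℕ) (G : ℝ → En n → En n) (T : ℝ) : Prop :=
  0 < T ∧ TendstoLocallyUniformlyOn
    (fun ε : ℝ => fun z => (ε⁻¹ : ℝ) • ∫ τ in T - ε..T, G τ z)
    (fun z => G T z) (𝓝[>] (0 : ℝ)) (𝔹 n)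

/-- The needle variation of `G` with data `(T, h)` and width `ε`. -/
def needle {n : ℕ} (G : ℝ → En n → En n) (T ε : ℝ) (h : En n → En n) :
    ℝ → En n → En n :=
  fun t => if t ∈ Ioo (T - ε) T then h else G t

/-- A (sequentially) open subset of `Hol(𝔹ⁿ,ℂⁿ)` for the topology of locally uniform
convergence. -/
def SeqOpenIn (n : ℕ) (V : Set (En n → En n)) : Prop :=
  V ⊆ Hol n ∧ ∀ f ∈ V, ∀ u : ℕ → En n → En n, (∀ k, u k ∈ Hol n) →
    TendstoLocallyUniformlyOn u f atTop (𝔹 n) → ∀ᶠ k in atTop, u k ∈ V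

/-- Directional derivative of a functional `Φ` at `f` along `h`. -/
def HasDirDeriv (n : ℕ) (Φ : (En n → En n) → ℂ) (f h : En n → En n) (c : ℂ) : Prop :=
  Tendsto (fun δ : ℂ => (Φ (f + δ • h) - Φ f) / δ) (𝓝[≠] (0 : ℂ)) (𝓝 c)

/-- `Φ` is complex differentiable at `F` with complex derivative `L`, in Hamilton's sense. -/
def HamiltonDiffAt (n : ℕ) (Φ : (En n → En n) → ℂ) (F : En n → En n)
    (L : (En n → En n) → ℂ) : Prop :=
  ∃ (V : Set (En n → En n)) (Λ : (En n → En n) → (En n → En n) → ℂ),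
    F ∈ V ∧ SeqOpenIn n V ∧
    (∀ f ∈ V, ∀ h ∈ Hol n, HasDirDeriv n Φ f h (Λ f h)) ∧
    (∀ f ∈ V, ∀ h ∈ Hol n, ∀ fk hk : ℕ → En n → En n,
      (∀ k, fk k ∈ V) → (∀ k, hk k ∈ Hol n) →
      TendstoLocallyUniformlyOn fk f atTop (𝔹 n) →
      TendstoLocallyUniformlyOn hk h atTop (𝔹 n) →
      Tendsto (fun k => Λ (fk k) (hk k)) atTop (𝓝 (Λ f h))) ∧
    L = Λ F

/-- A continuous linear functional on `Hol(𝔹ⁿ,ℂⁿ)`. -/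
def ContLinFunctional (n : ℕ) (L : (En n → En n) → ℂ) : Prop :=
  (∀ f ∈ Hol n, ∀ g ∈ Hol n, L (f + g) = L f + L g) ∧
  (∀ (c : ℂ), ∀ f ∈ Hol n, L (c • f) = c * L f) ∧
  (∀ (fk : ℕ → En n → En n), ∀ f ∈ Hol n, (∀ k, fk k ∈ Hol n) →
    TendstoLocallyUniformlyOn fk f atTop (𝔹 n) →
    Tendsto (fun k => L (fk k)) atTop (𝓝 (L f)))

/-- Support point of a class `A ⊆ Hol(𝔹ⁿ,ℂⁿ)`. -/
def IsSupportPoint (n : ℕ) (A : Set (En n → En n)) (g : En n → En n) : Prop :=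
  g ∈ A ∧ ∃ L : (En n → En n) → ℂ, ContLinFunctional n L ∧
    (∃ f₁ ∈ A, ∃ f₂ ∈ A, L f₁ ≠ L f₂) ∧
    ∀ h ∈ A, (L h).re ≤ (L g).re

/-- Polynomial maps `ℂⁿ → ℂⁿ`. -/
def IsPolyMap (n : ℕ) (P : En n → En n) : Prop :=
  ∀ i : Fin n, ∃ p : MvPolynomial (Fin n) ℂ,
    ∀ z : En n, P z i = MvPolynomial.eval (fun j => z j) p

/-- The Runge property of the domains `φ_{0,t}(𝔹ⁿ)` (Arosio–Bracci–Wold). -/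
def RungeProp (n : ℕ) (φ : ℝ → ℝ → En n → En n) : Prop :=
  ∀ t : ℝ, 0 ≤ t → ∀ g : En n → En n, DifferentiableOn ℂ g (𝔹 n) → g 0 = 0 →
    fderiv ℂ g 0 = 0 →
    ∃ P : ℕ → En n → En n,
      (∀ k, IsPolyMap n (P k) ∧ P k 0 = 0 ∧ fderiv ℂ (P k) 0 = 0) ∧
      TendstoLocallyUniformlyOn (fun k z => P k (φ 0 t z)) g atTop (𝔹 n)

/-!
For a fixed `z`, the Lebesgue differentiation theorem makes almost every `t` a Lebesgue point of
`τ ↦ G τ z`; running over a countable dense set of `z` keeps the exceptional set null. Pointwise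
convergence on that dense set upgrades to locally uniform convergence because `ℳₙ` is uniformly
Lipschitz on every ball `‖z‖ ≤ r < 1`: the Carathéodory inequality for `ζ ↦ -⟪w, h (ζ • w)⟫ / ζ`
bounds `⟪z, h z⟫`, the maximum principle turns this into `‖h z‖ ≤ 8 / (1 - r) ^ 2`, and the
Schwarz lemma turns that into a Lipschitz bound. The backward averages inherit the Lipschitz
constant, and equi-Lipschitz maps converging on a dense set converge uniformly on compact sets.
-/

open scoped InnerProductSpace ComplexConjugate NNReal

theorem norm_le_of_re_nonneg_of_apply_zero_eq_one {p : ℂ → ℂ}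
    (hp : DifferentiableOn ℂ p (ball 0 1)) (hre : ∀ ζ ∈ ball (0 : ℂ) 1, 0 ≤ (p ζ).re)
    (hp0 : p 0 = 1) {ζ : ℂ} (hζ : ‖ζ‖ < 1) : ‖p ζ‖ ≤ (1 + ‖ζ‖) / (1 - ‖ζ‖) := by
  have hden : ∀ w ∈ ball (0 : ℂ) 1, p w + 1 ≠ 0 := fun w hw hw0 => by
    have := congrArg Complex.re hw0
    simp only [Complex.add_re, Complex.one_re, Complex.zero_re] at this
    linarith [hre w hw]
  have hcayley : ∀ w ∈ ball (0 : ℂ) 1, ‖p w - 1‖ ≤ ‖p w + 1‖ := fun w hw => by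
    rw [Complex.norm_def, Complex.norm_def]
    refine Real.sqrt_le_sqrt ?_
    simp only [Complex.normSq_apply, Complex.sub_re, Complex.add_re, Complex.sub_im,
      Complex.add_im, Complex.one_re, Complex.one_im]
    nlinarith [hre w hw]
  set φ : ℂ → ℂ := fun w => (p w - 1) / (p w + 1)
  have hφ : DifferentiableOn ℂ φ (ball 0 1) := (hp.sub_const 1).div (hp.add_const 1) hden
  have hmaps : MapsTo φ (ball 0 1) (closedBall 0 1) := fun w hw => by
    rw [mem_closedBall_zero_iff, norm_div]
    exact div_le_one_of_le₀ (hcayley w hw) (norm_nonneg _)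
  have hschwarz : ‖φ ζ‖ ≤ ‖ζ‖ :=
    Complex.norm_le_norm_of_mapsTo_ball hφ hmaps (by simp [φ, hp0]) hζ
  have hζ' : ζ ∈ ball (0 : ℂ) 1 := mem_ball_zero_iff.2 hζ
  have hsub : ‖p ζ - 1‖ ≤ ‖ζ‖ * (‖p ζ‖ + 1) := calc
    ‖p ζ - 1‖ = ‖φ ζ‖ * ‖p ζ + 1‖ := by
      rw [← norm_mul, div_mul_cancel₀ _ (hden ζ hζ')]
    _ ≤ ‖ζ‖ * (‖p ζ‖ + 1) := by
      gcongr
      simpa using norm_add_le (p ζ) 1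
  have := norm_sub_norm_le (p ζ) 1
  rw [norm_one] at this
  rw [le_div_iff₀ (by linarith)]
  nlinarith [norm_nonneg ζ]

theorem lipschitzOnWith_closedBall_of_norm_le {E F : Type*} [NormedAddCommGroup E]
    [NormedSpace ℂ E] [NormedAddCommGroup F] [NormedSpace ℂ F] {f : E → F} {c : E} {r R C : ℝ}
    (hd : DifferentiableOn ℂ f (ball c R)) (hC : ∀ z ∈ ball c R, ‖f z‖ ≤ C) (hrR : r < R) :
    LipschitzOnWith (2 * C / (R - r)).toNNReal f (closedBall c r) := by
  refine LipschitzOnWith.of_dist_le' fun a ha b hb => ?_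
  have hρ : 0 < R - r := sub_pos.2 hrR
  have hdiam : ∀ w ∈ ball c R, dist (f w) (f a) ≤ 2 * C := fun w hw => by
    have haR : a ∈ ball c R := closedBall_subset_ball hrR ha
    rw [dist_eq_norm]
    linarith [norm_sub_le (f w) (f a), hC w hw, hC a haR]
  rcases lt_or_ge (dist b a) (R - r) with hclose | hfar
  · have hball : ball a (R - r) ⊆ ball c R := by
      refine ball_subset_ball' ?_
      linarith [mem_closedBall.1 ha]
    rw [dist_comm (f a), dist_comm a]
    exact Complex.dist_le_div_mul_dist_of_mapsTo_ball (hd.mono hball)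
      (fun w hw => mem_closedBall.2 (hdiam w (hball hw))) (mem_ball.2 hclose)
  · have hC0 : 0 ≤ 2 * C := dist_nonneg.trans (hdiam a (closedBall_subset_ball hrR ha))
    calc dist (f a) (f b) ≤ 2 * C := by
          rw [dist_comm]; exact hdiam b (closedBall_subset_ball hrR hb)
      _ = 2 * C / (R - r) * (R - r) := (div_mul_cancel₀ _ hρ.ne').symm
      _ ≤ 2 * C / (R - r) * dist a b := by
          rw [dist_comm]; gcongr

theorem ClassM.norm_inner_le {n : ℕ} {h : En n → En n} (hh : h ∈ ClassM n) {z : En n}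
    (hz : ‖z‖ < 1) : ‖⟪z, h z⟫_ℂ‖ ≤ ‖z‖ ^ 2 * ((1 + ‖z‖) / (1 - ‖z‖)) := by
  obtain ⟨hdiff, h0, hder, hre⟩ := hh
  rcases eq_or_ne z 0 with rfl | hz0
  · simp [h0]
  set w : En n := ((‖z‖⁻¹ : ℝ) : ℂ) • z
  have hw : ‖w‖ = 1 := by simp [w, norm_smul, hz0]
  have hline : ∀ ζ ∈ ball (0 : ℂ) 1, ζ • w ∈ 𝔹 n := fun ζ hζ => by
    simpa [𝔹, norm_smul, hw] using hζ
  set f : ℂ → ℂ := fun ζ => ⟪w, h (ζ • w)⟫_ℂ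
  have hf : DifferentiableOn ℂ f (ball 0 1) :=
    (innerSL ℂ w).differentiable.comp_differentiableOn
      (hdiff.comp (differentiable_id.smul_const w).differentiableOn hline)
  have hf0 : f 0 = 0 := by simp [f, h0]
  have hf' : HasDerivAt f (-1) 0 := by
    have hball : 𝔹 n ∈ 𝓝 (0 : En n) := isOpen_ball.mem_nhds (mem_ball_self one_pos)
    have hdh : HasFDerivAt h (-1 : En n →L[ℂ] En n) ((0 : ℂ) • w) := by
      rw [zero_smul, ← hder]
      exact (hdiff.differentiableAt hball).hasFDerivAt
    have hline' : HasDerivAt (fun ζ : ℂ => ζ • w) w 0 := by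
      simpa using (hasDerivAt_id (0 : ℂ)).smul_const w
    have := (innerSL ℂ w).hasFDerivAt.comp_hasDerivAt 0 (hdh.comp_hasDerivAt 0 hline')
    simp [inner_self_eq_norm_sq_to_K, hw] at this
    exact this
  set p : ℂ → ℂ := fun ζ => -dslope f 0 ζ
  have hfp : ∀ ζ, f ζ = -(ζ * p ζ) := fun ζ => by
    simpa [p, hf0, eq_comm] using sub_smul_dslope f 0 ζ
  have hp : DifferentiableOn ℂ p (ball 0 1) :=
    ((Complex.differentiableOn_dslope (ball_mem_nhds _ one_pos)).2 hf).neg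
  have hp0 : p 0 = 1 := by simp [p, dslope_same, hf'.deriv]
  have hpre : ∀ ζ ∈ ball (0 : ℂ) 1, 0 ≤ (p ζ).re := by
    intro ζ hζ
    rcases eq_or_ne ζ 0 with rfl | hζ0
    · simp [hp0]
    have hinner : ⟪h (ζ • w), ζ • w⟫_ℂ = -((Complex.normSq ζ : ℂ) * conj (p ζ)) := by
      rw [inner_smul_right, ← inner_conj_symm]
      change ζ * conj (f ζ) = _
      rw [hfp, ← Complex.mul_conj]
      simp only [map_neg, map_mul]
      ring
    have := hre _ (hline ζ hζ)
    rw [hinner, Complex.neg_re, Complex.re_ofReal_mul, Complex.conj_re] at this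
    nlinarith [Complex.normSq_pos.2 hζ0]
  have hcar := norm_le_of_re_nonneg_of_apply_zero_eq_one hp hpre hp0 (ζ := (‖z‖ : ℂ))
    (by simpa using hz)
  have hz' : z = (‖z‖ : ℂ) • w := by simp [w, smul_smul, hz0]
  calc ‖⟪z, h z⟫_ℂ‖ = ‖z‖ ^ 2 * ‖p ‖z‖‖ := by
        conv_lhs => rw [hz', inner_smul_left]
        change ‖conj (‖z‖ : ℂ) * f ‖z‖‖ = _
        rw [hfp]
        simp [sq, mul_assoc]
    _ ≤ ‖z‖ ^ 2 * ((1 + ‖z‖) / (1 - ‖z‖)) := by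
        gcongr
        simpa using hcar

theorem ClassM.norm_le {n : ℕ} {h : En n → En n} (hh : h ∈ ClassM n) {r : ℝ} (hr : r < 1)
    {z : En n} (hz : ‖z‖ ≤ r) : ‖h z‖ ≤ 8 / (1 - r) ^ 2 := by
  rcases eq_or_ne (h z) 0 with hz0 | hz0
  · rw [hz0, norm_zero]; positivity
  set ρ : ℝ := (1 - r) / 2
  have hρ : 0 < ρ := by simp only [ρ]; linarith
  set v : En n := ((ρ / ‖h z‖ : ℝ) : ℂ) • h z
  have hv : ‖v‖ = ρ := by simp [v, norm_smul, abs_of_pos hρ, hz0]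
  have hnorm : ∀ ζ : ℂ, ‖z + ζ • v‖ ≤ r + ‖ζ‖ * ρ := fun ζ => by
    simpa [norm_smul, hv] using
      (norm_add_le z (ζ • v)).trans (by linarith [hz] : _ ≤ r + ‖ζ • v‖)
  -- On the unit circle `Φ ζ = ζ * ⟪z + ζ • v, h (z + ζ • v)⟫`, so the maximum principle bounds
  -- `‖Φ 0‖ = ρ * ‖h z‖` by `ClassM.norm_inner_le` on the ball of radius `r + ρ`.
  set Φ : ℂ → ℂ := fun ζ => ζ * ⟪z, h (z + ζ • v)⟫_ℂ + ⟪v, h (z + ζ • v)⟫_ℂ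
  have hΦ : DifferentiableOn ℂ Φ (ball 0 2) := by
    have hline : MapsTo (fun ζ : ℂ => z + ζ • v) (ball 0 2) (𝔹 n) := fun ζ hζ => by
      rw [mem_ball_zero_iff] at hζ
      simp only [𝔹, mem_ball_zero_iff]
      have hρr : r + 2 * ρ = 1 := by simp only [ρ]; ring
      nlinarith [hnorm ζ]
    have hg : DifferentiableOn ℂ (fun ζ : ℂ => h (z + ζ • v)) (ball 0 2) :=
      hh.1.comp ((differentiable_id.smul_const v).const_add z).differentiableOn hline
    exact (differentiableOn_id.mul ((innerSL ℂ z).differentiable.comp_differentiableOn hg)).add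
      ((innerSL ℂ v).differentiable.comp_differentiableOn hg)
  have hcircle : ∀ ζ ∈ frontier (ball (0 : ℂ) 1), ‖Φ ζ‖ ≤ 2 / ρ := by
    intro ζ hζ
    rw [frontier_ball 0 one_ne_zero, mem_sphere_zero_iff_norm] at hζ
    set x := z + ζ • v
    have hx : ‖x‖ ≤ 1 - ρ := by
      have hρr : r + ρ = 1 - ρ := by simp only [ρ]; ring
      linarith [hnorm ζ, hζ ▸ one_mul ρ]
    have hΦx : Φ ζ = ζ * ⟪x, h x⟫_ℂ := by
      have hζζ : ζ * conj ζ = 1 := by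
        rw [Complex.mul_conj, Complex.normSq_eq_norm_sq, hζ]; simp
      simp only [Φ, x, inner_add_left, inner_smul_left]
      linear_combination -⟪v, h (z + ζ • v)⟫_ℂ * hζζ
    rw [hΦx, norm_mul, hζ, one_mul]
    calc ‖⟪x, h x⟫_ℂ‖ ≤ ‖x‖ ^ 2 * ((1 + ‖x‖) / (1 - ‖x‖)) :=
          ClassM.norm_inner_le hh (by linarith)
      _ ≤ 1 * (2 / ρ) := by
          have : ‖x‖ ≤ 1 := by linarith
          gcongr
          · exact pow_le_one₀ (norm_nonneg x) this
          · linarith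
          · linarith
      _ = 2 / ρ := one_mul _
  have hmax : ‖Φ 0‖ ≤ 2 / ρ :=
    Complex.norm_le_of_forall_mem_frontier_norm_le isBounded_ball
      (hΦ.diffContOnCl_ball (closedBall_subset_ball one_lt_two)) hcircle
      (subset_closure (mem_ball_self one_pos))
  have hΦ0 : ‖Φ 0‖ = ρ * ‖h z‖ := by
    simp [Φ, v, inner_self_eq_norm_sq_to_K, abs_of_pos hρ]
    field_simp
  rw [hΦ0, le_div_iff₀ hρ] at hmax
  have h1r : (1 - r) ^ 2 = 4 * ρ ^ 2 := by simp only [ρ]; ring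
  rw [le_div_iff₀ (by positivity), h1r]
  nlinarith

theorem ClassM.lipschitzOnWith {n : ℕ} {h : En n → En n} (hh : h ∈ ClassM n) {r : ℝ}
    (hr : r < 1) : LipschitzOnWith (128 / (1 - r) ^ 3).toNNReal h (closedBall 0 r) := by
  have hR : (1 + r) / 2 < 1 := by linarith
  have hlip := lipschitzOnWith_closedBall_of_norm_le (hh.1.mono (ball_subset_ball hR.le))
    (fun z hz => ClassM.norm_le hh hR (mem_ball_zero_iff.1 hz).le) (by linarith : r < (1 + r) / 2)
  have hconst : 128 / (1 - r) ^ 3 = 2 * (8 / (1 - (1 + r) / 2) ^ 2) / ((1 + r) / 2 - r) := by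
    rw [show 1 - (1 + r) / 2 = (1 - r) / 2 by ring, show (1 + r) / 2 - r = (1 - r) / 2 by ring]
    have : 1 - r ≠ 0 := by linarith
    field_simp
    ring
  rwa [hconst]

section BackwardAverage

variable {E : Type*} [NormedAddCommGroup E] [NormedSpace ℝ E]

def backwardAverage (f : ℝ → E) (t ε : ℝ) : E := ε⁻¹ • ∫ τ in t - ε..t, f τ

theorem backwardAverage_eventuallyEq {f g : ℝ → E} {t : ℝ} (h : f =ᶠ[𝓝 t] g) :
    backwardAverage f t =ᶠ[𝓝[>] 0] backwardAverage g t := by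
  obtain ⟨δ, hδ, hfg⟩ := Metric.eventually_nhds_iff_ball.1 h
  filter_upwards [Ioo_mem_nhdsGT hδ] with ε hε
  refine congrArg _ (intervalIntegral.integral_congr fun τ hτ => hfg τ ?_)
  rw [uIcc_of_le (by linarith [hε.1])] at hτ
  rw [mem_ball, Real.dist_eq, abs_sub_lt_iff]
  constructor <;> linarith [hτ.1, hτ.2, hε.2]

theorem MeasureTheory.LocallyIntegrable.ae_tendsto_backwardAverage [CompleteSpace E] {f : ℝ → E}
    (hf : LocallyIntegrable f) : ∀ᵐ t, Tendsto (backwardAverage f t) (𝓝[>] 0) (𝓝 (f t)) := by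
  have hint : ∀ a b, IntervalIntegrable f volume a b := fun a b =>
    (hf.integrableOn_isCompact isCompact_uIcc).intervalIntegrable
  filter_upwards [LocallyIntegrable.ae_hasDerivAt_integral hf] with t ht
  have hleft : Tendsto (fun ε : ℝ => t - ε) (𝓝[>] 0) (𝓝[≠] t) := by
    refine tendsto_nhdsWithin_iff.2 ⟨?_, ?_⟩
    · simpa using ((continuous_sub_left t).tendsto 0).mono_left nhdsWithin_le_nhds
    · filter_upwards [self_mem_nhdsWithin] with ε (hε : 0 < ε)
      simpa using hε.ne'
  refine ((hasDerivAt_iff_tendsto_slope.1 (ht 0)).comp hleft).congr fun ε => ?_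
  rw [Function.comp_apply, slope_def_module, backwardAverage,
    intervalIntegral.integral_interval_sub_left (hint _ _) (hint _ _),
    intervalIntegral.integral_symm, sub_sub_cancel_left, inv_neg, neg_smul_neg]

theorem MeasureTheory.LocallyIntegrableOn.ae_tendsto_backwardAverage [CompleteSpace E] {f : ℝ → E}
    {U : Set ℝ} (hf : LocallyIntegrableOn f U) (hU : IsOpen U) :
    ∀ᵐ t, t ∈ U → Tendsto (backwardAverage f t) (𝓝[>] 0) (𝓝 (f t)) := by
  obtain ⟨u, hu, hUu, hfu⟩ := hf.exists_nat_integrableOn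
  have hpieces : ∀ k, ∀ᵐ t, Tendsto (backwardAverage ((u k ∩ U).indicator f) t) (𝓝[>] 0)
      (𝓝 ((u k ∩ U).indicator f t)) := fun k =>
    ((hfu k).integrable_indicator ((hu k).inter hU).measurableSet).locallyIntegrable
      |>.ae_tendsto_backwardAverage
  filter_upwards [ae_all_iff.2 hpieces] with t ht htU
  obtain ⟨k, hk⟩ := mem_iUnion.1 (hUu htU)
  have hlocal : (u k ∩ U).indicator f =ᶠ[𝓝 t] f := by
    filter_upwards [((hu k).inter hU).mem_nhds ⟨hk, htU⟩] with τ hτ using indicator_of_mem hτ f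
  rw [← hlocal.eq_of_nhds]
  exact (ht k).congr' (backwardAverage_eventuallyEq hlocal)

theorem lipschitzOnWith_backwardAverage {X : Type*} [PseudoMetricSpace X] {f : ℝ → X → E}
    {s : Set X} {K : ℝ≥0} {t ε : ℝ} (hε : 0 < ε)
    (hf : ∀ᵐ τ, τ ∈ Ioc (t - ε) t → LipschitzOnWith K (f τ) s)
    (hint : ∀ z ∈ s, IntervalIntegrable (fun τ => f τ z) volume (t - ε) t) :
    LipschitzOnWith K (fun z => backwardAverage (fun τ => f τ z) t ε) s := by
  refine LipschitzOnWith.of_dist_le_mul fun x hx y hy => ?_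
  have hbound : ‖∫ τ in t - ε..t, (f τ x - f τ y)‖ ≤ K * dist x y * |t - (t - ε)| := by
    refine intervalIntegral.norm_integral_le_of_norm_le_const_ae ?_
    filter_upwards [hf] with τ hτ hτI
    rw [uIoc_of_le (by linarith)] at hτI
    rw [← dist_eq_norm]
    exact (hτ hτI).dist_le_mul x hx y hy
  rw [sub_sub_cancel, abs_of_pos hε] at hbound
  rw [dist_eq_norm, backwardAverage, backwardAverage, ← smul_sub,
    ← intervalIntegral.integral_sub (hint x hx) (hint y hy), norm_smul,
    Real.norm_of_nonneg (inv_nonneg.2 hε.le)]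
  calc ε⁻¹ * ‖∫ τ in t - ε..t, (f τ x - f τ y)‖ ≤ ε⁻¹ * (K * dist x y * ε) := by gcongr
    _ = K * dist x y := by field_simp

end BackwardAverage

theorem tendstoUniformlyOn_of_lipschitzOnWith_of_tendsto {ι X Y : Type*} [PseudoMetricSpace X]
    [PseudoMetricSpace Y] {l : Filter ι} {F : ι → X → Y} {g : X → Y} {K D V : Set X}
    {L : ℝ≥0} (hK : IsCompact K) (hKD : K ⊆ closure D) (hKV : K ⊆ V) (hDV : D ⊆ V)
    (hF : ∀ᶠ i in l, LipschitzOnWith L (F i) V) (hg : LipschitzOnWith L g V)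
    (hD : ∀ y ∈ D, Tendsto (fun i => F i y) l (𝓝 (g y))) : TendstoUniformlyOn F g l K := by
  rw [Metric.tendstoUniformlyOn_iff]
  intro η hη
  set δ : ℝ := η / (4 * (L + 1))
  have hδ : 0 < δ := by positivity
  have hLδ : L * δ ≤ η / 4 := by
    rw [mul_div_assoc', div_le_div_iff₀ (by positivity) (by norm_num)]
    nlinarith [L.coe_nonneg]
  obtain ⟨T, hTD, hTfin, hKT⟩ := hK.elim_finite_subcover_image (b := D) (c := fun y => ball y δ)
    (fun _ _ => isOpen_ball) fun x hx => by
      obtain ⟨y, hy, hxy⟩ := Metric.mem_closure_iff.1 (hKD hx) δ hδ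
      exact mem_biUnion hy (mem_ball.2 hxy)
  have hnet : ∀ᶠ i in l, ∀ y ∈ T, dist (F i y) (g y) < η / 2 :=
    (eventually_all_finite hTfin).2 fun y hy =>
      Metric.tendsto_nhds.1 (hD y (hTD hy)) _ (half_pos hη)
  filter_upwards [hF, hnet] with i hFi hi z hz
  obtain ⟨y, hyT, hzy⟩ := mem_iUnion₂.1 (hKT hz)
  have hzy : dist z y < δ := hzy
  have hyV := hDV (hTD hyT)
  have h1 := hg.dist_le_mul z (hKV hz) y hyV
  have h2 := hFi.dist_le_mul y hyV z (hKV hz)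
  have h3 := hi y hyT
  rw [dist_comm y z] at h2
  rw [dist_comm] at h3
  have : (L : ℝ) * dist z y ≤ L * δ := by gcongr
  linarith [dist_triangle4 (g z) (g y) (F i y) (F i z)]

theorem IsHerglotz.locallyIntegrableOn {n : ℕ} {G : ℝ → En n → En n} (hG : IsHerglotz n G)
    {z : En n} (hz : z ∈ 𝔹 n) : LocallyIntegrableOn (fun τ => G τ z) (Ici 0) := by
  have hbound : ∀ᵐ τ ∂volume.restrict (Ici 0), ‖G τ z‖ ≤ 8 / (1 - ‖z‖) ^ 2 :=
    hG.2.mono fun τ hτ => ClassM.norm_le hτ (mem_ball_zero_iff.1 hz) le_rfl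
  exact (locallyIntegrableOn_iff_locallyIntegrable_restrict isClosed_Ici).2
    ((memLp_top_of_bound (hG.1 z hz).aestronglyMeasurable _ hbound).locallyIntegrable le_top)

theorem IsHerglotz.tendstoLocallyUniformlyOn_backwardAverage {n : ℕ} {G : ℝ → En n → En n}
    (hG : IsHerglotz n G) {D : Set (En n)} (hD : Dense D) {t : ℝ} (ht : 0 < t)
    (hGt : G t ∈ ClassM n)
    (hDt : ∀ y ∈ D ∩ 𝔹 n, Tendsto (backwardAverage (fun τ => G τ y) t) (𝓝[>] 0) (𝓝 (G t y))) :
    TendstoLocallyUniformlyOn (fun ε z => backwardAverage (fun τ => G τ z) t ε) (G t)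
      (𝓝[>] 0) (𝔹 n) := by
  refine (tendstoLocallyUniformlyOn_iff_forall_isCompact isOpen_ball).2 fun K hK𝔹 hK => ?_
  obtain ⟨r, hr, hKr⟩ := exists_lt_subset_ball hK.isClosed hK𝔹
  have hr𝔹 : closedBall (0 : En n) r ⊆ 𝔹 n := closedBall_subset_ball hr
  have hclassM : ∀ᵐ τ, τ ∈ Ici 0 → G τ ∈ ClassM n :=
    (ae_restrict_iff' measurableSet_Ici).1 hG.2
  have haverage : ∀ ε ∈ Ioo 0 t, LipschitzOnWith (128 / (1 - r) ^ 3).toNNReal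
      (fun z => backwardAverage (fun τ => G τ z) t ε) (closedBall 0 r) := by
    intro ε ⟨hε, hεt⟩
    refine lipschitzOnWith_backwardAverage hε ?_ fun z hz => ?_
    · filter_upwards [hclassM] with τ hτ hτI
      exact ClassM.lipschitzOnWith (hτ (show 0 ≤ τ by linarith [hτI.1])) hr
    · refine ((hG.locallyIntegrableOn (hr𝔹 hz)).integrableOn_compact_subset ?_
        isCompact_uIcc).intervalIntegrable
      rw [uIcc_of_le (by linarith)]
      exact fun τ hτ => le_trans (by linarith) hτ.1
  refine tendstoUniformlyOn_of_lipschitzOnWith_of_tendsto hK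
    (hKr.trans (hD.open_subset_closure_inter isOpen_ball)) (hKr.trans ball_subset_closedBall)
    (inter_subset_left.trans ball_subset_closedBall) ?_ (ClassM.lipschitzOnWith hGt hr)
    fun y hy => hDt y ⟨hy.2, hr𝔹 (ball_subset_closedBall hy.1)⟩
  filter_upwards [Ioo_mem_nhdsGT ht] with ε hε using haverage ε hε

/-- **Lemma (Lebesgue points of a Herglotz vector field).** -/
theorem ae_regular_points {n : ℕ} (G : ℝ → En n → En n) (hG : IsHerglotz n G) :
    ∃ E : Set ℝ, E ⊆ Ici 0 ∧ volume E = 0 ∧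
      ∀ t : ℝ, 0 < t → t ∉ E →
        TendstoLocallyUniformlyOn
          (fun ε : ℝ => fun z => (ε⁻¹ : ℝ) • ∫ τ in t - ε..t, G τ z)
          (fun z => G t z) (𝓝[>] (0 : ℝ)) (𝔹 n) := by
  obtain ⟨D, hDc, hD⟩ := TopologicalSpace.exists_countable_dense (En n)
  set good : ℝ → Prop := fun t => G t ∈ ClassM n ∧
    ∀ y ∈ D ∩ 𝔹 n, Tendsto (backwardAverage (fun τ => G τ y) t) (𝓝[>] 0) (𝓝 (G t y))
  have hLebesgue : ∀ᵐ t, ∀ y ∈ D ∩ 𝔹 n, t ∈ Ioi 0 →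
      Tendsto (backwardAverage (fun τ => G τ y) t) (𝓝[>] 0) (𝓝 (G t y)) :=
    (ae_ball_iff (hDc.mono inter_subset_left)).2 fun y hy =>
      ((hG.locallyIntegrableOn hy.2).mono_set Ioi_subset_Ici_self).ae_tendsto_backwardAverage
        isOpen_Ioi
  have hgood : ∀ᵐ t ∂volume.restrict (Ici 0), 0 < t → good t := by
    filter_upwards [hG.2, ae_restrict_of_ae hLebesgue] with t hGt hLt ht
    exact ⟨hGt, fun y hy => hLt y hy ht⟩
  refine ⟨{t | ¬(0 < t → good t)} ∩ Ici 0, inter_subset_right, ?_, fun t ht htE => ?_⟩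
  · rw [← Measure.restrict_apply' measurableSet_Ici]
    exact ae_iff.1 hgood
  · obtain ⟨hGt, hDt⟩ : good t := by_contra fun h => htE ⟨fun h' => h (h' ht), ht.le⟩
    exact hG.tendstoLocallyUniformlyOn_backwardAverage hD ht hGt hDt
end
end

section
/- Let G be a Herglotz vector field in the class ℳₙ, let T ∈ R_G be a regular point and let 0 ≤ s < T. Then G(φ^G_{s,T}(z),T) = lim_{ε→0⁺} (1/ε)∫_{T−ε}^{T} G(φ^G_{s,τ}(z),τ)dτ, locally uniformly with respect to z ∈ 𝔹ⁿ. -/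
open Metric MeasureTheory Filter Topology Set

noncomputable section

/-!
Members of `ℳₙ` are bounded and uniformly Lipschitz on every `closedBall 0 r`, `r < 1`: the
one-variable functions `ζ ↦ -⟪u, h (ζ u)⟫ / ζ` have nonnegative real part, so Borel–Carathéodory
bounds `⟪h w, w⟫`, and the maximum modulus principle and Cauchy estimates do the rest. Since
`Re ⟪G τ w, w⟫ ≤ 0`, a trajectory `τ ↦ φ s τ z` never leaves `closedBall 0 ‖z‖`, so it moves by
`O(ε)` on `[T - ε, T]`. Replacing `φ s τ z` by `φ s T z` in the backward average therefore costs
`O(ε)` uniformly on compact sets, and the average at the frozen point converges because `T` is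
regular.
-/

open ComplexConjugate

/-- Cauchy estimate: `f` maps each ball of radius `R` centred in `closedBall 0 r` into a ball of
radius `2C`, so `‖fderiv ℂ f‖ ≤ 2C / R` there. -/
theorem norm_sub_le_of_differentiableOn_ball {E F : Type*} [NormedAddCommGroup E]
    [NormedSpace ℂ E] [NormedAddCommGroup F] [NormedSpace ℂ F] {f : E → F} {r R C : ℝ}
    (hR : 0 < R) (hf : DifferentiableOn ℂ f (ball 0 (r + R)))
    (hC : ∀ y ∈ ball (0 : E) (r + R), ‖f y‖ ≤ C) {x y : E} (hx : ‖x‖ ≤ r) (hy : ‖y‖ ≤ r) :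
    ‖f x - f y‖ ≤ 2 * C / R * ‖x - y‖ := by
  have hball : ∀ x' ∈ closedBall (0 : E) r, ball x' R ⊆ ball 0 (r + R) := fun x' hx' =>
    ball_subset_ball' (by rw [dist_zero_right]; linarith [mem_closedBall_zero_iff.1 hx'])
  have hdiff : ∀ x' ∈ closedBall (0 : E) r, DifferentiableAt ℂ f x' := fun x' hx' =>
    hf.differentiableAt (isOpen_ball.mem_nhds (hball x' hx' (mem_ball_self hR)))
  have hderiv : ∀ x' ∈ closedBall (0 : E) r, ‖fderiv ℂ f x'‖ ≤ 2 * C / R := by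
    intro x' hx'
    refine Complex.norm_fderiv_le_div_of_mapsTo_ball (hf.mono (hball x' hx')) (fun y hy => ?_) hR
    rw [mem_closedBall, dist_eq_norm, two_mul]
    exact (norm_sub_le _ _).trans (add_le_add (hC y (hball x' hx' hy))
      (hC x' (hball x' hx' (mem_ball_self hR))))
  exact (convex_closedBall 0 r).norm_image_sub_le_of_norm_fderiv_le hdiff hderiv
    (mem_closedBall_zero_iff.2 hy) (mem_closedBall_zero_iff.2 hx)

theorem norm_le_of_re_nonneg {p : ℂ → ℂ} (hp : DifferentiableOn ℂ p (ball 0 1)) (hp0 : p 0 = 1)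
    (hre : ∀ ζ ∈ ball (0 : ℂ) 1, 0 ≤ (p ζ).re) {ζ : ℂ} (hζ : ‖ζ‖ < 1) :
    ‖p ζ‖ ≤ 4 / (1 - ‖ζ‖) := by
  have hBC := Complex.borelCaratheodory one_pos hp.neg
    (fun ζ hζ => show -(p ζ).re ≤ 1 by linarith [hre ζ hζ]) one_pos (mem_ball_zero_iff.2 hζ)
  simp only [Pi.neg_apply, norm_neg, hp0, norm_one] at hBC
  have h1ζ : 0 < 1 - ‖ζ‖ := by linarith
  calc ‖p ζ‖ ≤ 2 * 1 * ‖ζ‖ / (1 - ‖ζ‖) + 1 * (1 + ‖ζ‖) / (1 - ‖ζ‖) := hBC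
    _ ≤ 4 / (1 - ‖ζ‖) := by rw [← add_div]; gcongr; linarith

theorem intervalIntegrable_of_forall_lt {E : Type*} [NormedAddCommGroup E] {f : ℝ → E}
    {a u C : ℝ} (hau : a < u) (hf : ∀ t ∈ Ioo a u, IntervalIntegrable f volume a t)
    (hC : ∀ᵐ τ, τ ∈ Ioo a u → ‖f τ‖ ≤ C) : IntervalIntegrable f volume a u := by
  obtain ⟨t, -, ht, hlim⟩ := exists_seq_strictMono_tendsto' hau
  have hcover : Ioo a u = ⋃ k, Ioc a (t k) := by
    ext x
    simp only [mem_Ioo, mem_iUnion, mem_Ioc]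
    constructor
    · rintro ⟨hax, hxu⟩
      obtain ⟨k, hk⟩ := (hlim.eventually (lt_mem_nhds hxu)).exists
      exact ⟨k, hax, hk.le⟩
    · rintro ⟨k, hax, hxt⟩
      exact ⟨hax, hxt.trans_lt (ht k).2⟩
  have hmeas : AEStronglyMeasurable f (volume.restrict (Ioo a u)) := by
    rw [hcover, aestronglyMeasurable_iUnion_iff]
    exact fun k => ((intervalIntegrable_iff_integrableOn_Ioc_of_le (ht k).1.le).1
      (hf _ (ht k))).aestronglyMeasurable
  rw [intervalIntegrable_iff_integrableOn_Ioc_of_le hau.le, IntegrableOn,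
    ← Measure.restrict_congr_set Ioo_ae_eq_Ioc]
  exact Integrable.mono' (integrableOn_const measure_Ioo_lt_top.ne) hmeas
    ((ae_restrict_iff' measurableSet_Ioo).2 hC)

theorem TendstoUniformlyOn.of_dist_le {ι α β : Type*} [PseudoMetricSpace β] {F F' : ι → α → β}
    {f : α → β} {p : Filter ι} {s : Set α} {g : ι → ℝ} (hF : TendstoUniformlyOn F f p s)
    (hg : Tendsto g p (𝓝 0)) (hd : ∀ᶠ i in p, ∀ x ∈ s, dist (F' i x) (F i x) ≤ g i) :
    TendstoUniformlyOn F' f p s := by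
  rw [Metric.tendstoUniformlyOn_iff] at hF ⊢
  intro ε hε
  filter_upwards [hF (ε / 2) (half_pos hε), hg.eventually (gt_mem_nhds (half_pos hε)), hd]
    with i hFi hgi hdi x hx
  calc dist (f x) (F' i x) ≤ dist (f x) (F i x) + dist (F i x) (F' i x) := dist_triangle _ _ _
    _ < ε / 2 + ε / 2 :=
        add_lt_add_of_lt_of_le (hFi x hx) ((dist_comm _ _).trans_le ((hdi x hx).trans hgi.le))
    _ = ε := add_halves ε

section Dissipative

variable {E : Type*} [NormedAddCommGroup E] [InnerProductSpace ℂ E] {f ψ : ℝ → E} {a b M : ℝ}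

lemma continuousOn_of_eq_add_integral (hf : IntervalIntegrable f volume a b)
    (hψ : ∀ t ∈ Icc a b, ψ t = ψ a + ∫ τ in a..t, f τ) : ContinuousOn ψ (Icc a b) :=
  (continuousOn_const.add ((intervalIntegral.continuousOn_primitive_interval' hf
    left_mem_uIcc).mono Icc_subset_uIcc)).congr hψ

lemma sub_eq_integral_of_eq_add_integral (hf : IntervalIntegrable f volume a b)
    (hψ : ∀ t ∈ Icc a b, ψ t = ψ a + ∫ τ in a..t, f τ) {x y : ℝ} (hx : x ∈ Icc a b)
    (hy : y ∈ Icc a b) : ψ y - ψ x = ∫ τ in x..y, f τ := by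
  rw [hψ y hy, hψ x hx, add_sub_add_left_eq_sub, intervalIntegral.integral_interval_sub_left
    (hf.mono_set (uIcc_subset_uIcc left_mem_uIcc (Icc_subset_uIcc hy)))
    (hf.mono_set (uIcc_subset_uIcc left_mem_uIcc (Icc_subset_uIcc hx)))]

variable [CompleteSpace E]

/-- `‖ψ y‖² - ‖ψ x‖² ≤ 2 Re ⟪ψ y, ψ y - ψ x⟫ = 2 ∫ Re ⟪ψ y, f τ⟫`, and replacing `ψ y` by `ψ τ`
in the integrand, where `Re ⟪ψ τ, f τ⟫ ≤ 0`, costs `M² (y - x)` pointwise. -/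
lemma norm_sq_sub_norm_sq_le_of_dissipative (hf : IntervalIntegrable f volume a b)
    (hψ : ∀ t ∈ Icc a b, ψ t = ψ a + ∫ τ in a..t, f τ)
    (hM : ∀ᵐ τ, τ ∈ Ioc a b → ‖f τ‖ ≤ M)
    (hdis : ∀ᵐ τ, τ ∈ Ioc a b → (inner ℂ (f τ) (ψ τ)).re ≤ 0)
    {x y : ℝ} (hx : x ∈ Icc a b) (hy : y ∈ Icc a b) (hxy : x ≤ y) :
    ‖ψ y‖ ^ 2 - ‖ψ x‖ ^ 2 ≤ 2 * M ^ 2 * (y - x) ^ 2 := by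
  have hfxy : IntervalIntegrable f volume x y :=
    hf.mono_set (uIcc_subset_uIcc (Icc_subset_uIcc hx) (Icc_subset_uIcc hy))
  have hpt : ∀ᵐ τ, τ ∈ Ioc x y → (inner ℂ (ψ y) (f τ)).re ≤ M ^ 2 * (y - x) := by
    filter_upwards [hM, hdis] with τ hτM hτdis hτ
    have hτab : τ ∈ Ioc a b := ⟨hx.1.trans_lt hτ.1, hτ.2.trans hy.2⟩
    have hdist : ‖ψ y - ψ τ‖ ≤ M * (y - τ) := by
      rw [sub_eq_integral_of_eq_add_integral hf hψ (Ioc_subset_Icc_self hτab) hy]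
      refine (intervalIntegral.norm_integral_le_of_norm_le_const_ae ?_).trans_eq
        (by rw [abs_of_nonneg (sub_nonneg.2 hτ.2)])
      filter_upwards [hM] with σ hσ hσ'
      rw [uIoc_of_le hτ.2] at hσ'
      exact hσ ⟨hτab.1.trans hσ'.1, hσ'.2.trans hy.2⟩
    have hsymm := inner_re_symm (𝕜 := ℂ) (ψ τ) (f τ)
    simp only [RCLike.re_to_complex] at hsymm
    calc (inner ℂ (ψ y) (f τ)).re
        = (inner ℂ (f τ) (ψ τ)).re + (inner ℂ (ψ y - ψ τ) (f τ)).re := by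
          rw [inner_sub_left, Complex.sub_re, hsymm]; ring
      _ ≤ 0 + ‖ψ y - ψ τ‖ * ‖f τ‖ := add_le_add (hτdis hτab) (re_inner_le_norm (𝕜 := ℂ) _ _)
      _ ≤ 0 + M * (y - τ) * M := by gcongr; exacts [(norm_nonneg _).trans hdist, hτM hτab]
      _ ≤ M ^ 2 * (y - x) := by nlinarith [sq_nonneg M, hτ.1]
  have hre : (inner ℂ (ψ y) (ψ y - ψ x)).re = ∫ τ in x..y, (inner ℂ (ψ y) (f τ)).re := by
    have hinner : inner ℂ (ψ y) (∫ τ in x..y, f τ) = ∫ τ in x..y, inner ℂ (ψ y) (f τ) :=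
      ((innerSL ℂ (ψ y)).intervalIntegral_comp_comm hfxy).symm
    rw [sub_eq_integral_of_eq_add_integral hf hψ hx hy, hinner]
    exact (Complex.reCLM.intervalIntegral_comp_comm
      ⟨(innerSL ℂ (ψ y)).integrable_comp hfxy.1, (innerSL ℂ (ψ y)).integrable_comp hfxy.2⟩).symm
  have hint : ∫ τ in x..y, (inner ℂ (ψ y) (f τ)).re ≤ M ^ 2 * (y - x) * (y - x) := by
    rw [intervalIntegral.integral_of_le hxy]
    calc ∫ τ in Ioc x y, (inner ℂ (ψ y) (f τ)).re ≤ ∫ _ in Ioc x y, M ^ 2 * (y - x) :=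
          setIntegral_mono_on_ae
            (Complex.reCLM.integrable_comp ((innerSL ℂ (ψ y)).integrable_comp hfxy.1))
            (integrableOn_const measure_Ioc_lt_top.ne) measurableSet_Ioc hpt
      _ = M ^ 2 * (y - x) * (y - x) := by simp [max_eq_left (sub_nonneg.2 hxy)]; ring
  have hsq := norm_sub_sq (𝕜 := ℂ) (ψ y) (ψ x)
  have hself := inner_self_eq_norm_sq (𝕜 := ℂ) (ψ y)
  rw [inner_sub_right, Complex.sub_re] at hre
  simp only [RCLike.re_to_complex] at hsq hself
  nlinarith [sq_nonneg ‖ψ y - ψ x‖]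

lemma norm_le_of_dissipative (hf : IntervalIntegrable f volume a b)
    (hψ : ∀ t ∈ Icc a b, ψ t = ψ a + ∫ τ in a..t, f τ)
    (hM : ∀ᵐ τ, τ ∈ Ioc a b → ‖f τ‖ ≤ M)
    (hdis : ∀ᵐ τ, τ ∈ Ioc a b → (inner ℂ (f τ) (ψ τ)).re ≤ 0) :
    ∀ t ∈ Icc a b, ‖ψ t‖ ≤ ‖ψ a‖ := by
  intro t ht
  have hsq : ‖ψ t‖ ^ 2 ≤ ‖ψ a‖ ^ 2 := by
    -- the right slopes of `‖ψ‖²` at `x` are `O(z - x)`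
    refine image_le_of_liminf_slope_right_le_deriv_boundary (f := fun t => ‖ψ t‖ ^ 2)
      (B := fun _ => ‖ψ a‖ ^ 2) (B' := 0)
      ((continuousOn_of_eq_add_integral hf hψ).norm.pow 2) le_rfl continuousOn_const
      (fun x _ => hasDerivWithinAt_const x _ _) (fun x hx r hr => ?_) ht
    have hlim : Tendsto (fun z => 2 * M ^ 2 * (z - x)) (𝓝[>] x) (𝓝 0) := by
      have : Tendsto (fun z => 2 * M ^ 2 * (z - x)) (𝓝 x) (𝓝 (2 * M ^ 2 * (x - x))) :=
        (continuous_const.mul (continuous_id.sub continuous_const)).tendsto x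
      simpa using this.mono_left nhdsWithin_le_nhds
    refine Eventually.frequently ?_
    filter_upwards [Ioc_mem_nhdsGT hx.2, hlim.eventually (gt_mem_nhds hr)] with z hz hzr
    have hzx : 0 < z - x := sub_pos.2 hz.1
    rw [slope_def_field, div_lt_iff₀ hzx]
    calc ‖ψ z‖ ^ 2 - ‖ψ x‖ ^ 2 ≤ 2 * M ^ 2 * (z - x) ^ 2 :=
          norm_sq_sub_norm_sq_le_of_dissipative hf hψ hM hdis (Ico_subset_Icc_self hx)
            ⟨hx.1.trans hz.1.le, hz.2⟩ hz.1.le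
      _ = 2 * M ^ 2 * (z - x) * (z - x) := by ring
      _ < r * (z - x) := by gcongr
  exact (pow_le_pow_iff_left₀ (norm_nonneg _) (norm_nonneg _) two_ne_zero).1 hsq

end Dissipative

section ClassM

variable {n : ℕ} {h : En n → En n}

/-- For `w = ‖w‖ u` with `‖u‖ = 1`, the function `p ζ = -⟪u, h (ζ u)⟫ / ζ` has `p 0 = 1` and
`Re p ≥ 0`, and `⟪h w, w⟫ = -‖w‖² conj (p ‖w‖)`. -/
lemma norm_inner_le_of_mem_classM (hh : h ∈ ClassM n) {w : En n} (hw : w ∈ 𝔹 n) :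
    ‖(inner ℂ (h w) w : ℂ)‖ ≤ 4 / (1 - ‖w‖) := by
  obtain ⟨hdiff, h0, hder, hre⟩ := hh
  rcases eq_or_ne w 0 with rfl | hw0
  · simp
  set c : ℝ := ‖w‖
  have hc0 : 0 < c := norm_pos_iff.2 hw0
  set u : En n := (c : ℂ)⁻¹ • w
  have hu : ‖u‖ = 1 := by simp [u, norm_smul, c, hc0.ne']
  have hcu : (c : ℂ) • u = w := by simp [u, smul_smul, hc0.ne']
  have hmem : ∀ ζ ∈ ball (0 : ℂ) 1, ζ • u ∈ 𝔹 n := fun ζ hζ => by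
    simpa [𝔹, norm_smul, hu] using hζ
  set a : ℂ → ℂ := fun ζ => inner ℂ u (h (ζ • u))
  have ha0 : a 0 = 0 := by simp [a, h0]
  have hinner : ∀ ζ : ℂ, (inner ℂ (h (ζ • u)) (ζ • u) : ℂ) = ζ * conj (a ζ) := fun ζ => by
    rw [inner_smul_right, inner_conj_symm]
  have hda : HasDerivAt a (-1) 0 := by
    have hDh : HasFDerivAt h (-(1 : En n →L[ℂ] En n)) ((0 : ℂ) • u) := by
      rw [zero_smul, ← hder]
      exact (hdiff.differentiableAt (isOpen_ball.mem_nhds (mem_ball_self one_pos))).hasFDerivAt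
    exact ((innerSL ℂ u).hasFDerivAt.comp_hasDerivAt 0
      (hDh.comp_hasDerivAt 0 ((hasDerivAt_id (0 : ℂ)).smul_const u))).congr_deriv
      (by simp [inner_self_eq_norm_sq_to_K, hu])
  set p : ℂ → ℂ := fun ζ => -dslope a 0 ζ
  have hp_diff : DifferentiableOn ℂ p (ball 0 1) :=
    ((Complex.differentiableOn_dslope (ball_mem_nhds 0 one_pos)).2
      ((innerSL ℂ u).differentiable.comp_differentiableOn
        (hdiff.comp (differentiable_id.smul_const u).differentiableOn hmem))).neg
  have hp0 : p 0 = 1 := by simp [p, dslope_same, hda.deriv]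
  have hap : ∀ ζ : ℂ, a ζ = -(ζ * p ζ) := fun ζ => by
    simpa [p, ha0] using (sub_smul_dslope a 0 ζ).symm
  have hp_re : ∀ ζ ∈ ball (0 : ℂ) 1, 0 ≤ (p ζ).re := by
    intro ζ hζ
    rcases eq_or_ne ζ 0 with rfl | hζ0
    · simp [hp0]
    have hζu := hre _ (hmem ζ hζ)
    rw [hinner, hap] at hζu
    have hre_eq : (ζ * conj (-(ζ * p ζ))).re = -(Complex.normSq ζ * (p ζ).re) := by
      simp [Complex.mul_re, Complex.normSq_apply]; ring
    have hnorm : 0 < Complex.normSq ζ := Complex.normSq_pos.2 hζ0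
    nlinarith
  have hc1 : c < 1 := mem_ball_zero_iff.1 hw
  have hpc := norm_le_of_re_nonneg hp_diff hp0 hp_re (ζ := c) (by simpa [abs_of_pos hc0] using hc1)
  rw [Complex.norm_real, Real.norm_eq_abs, abs_of_pos hc0] at hpc
  calc ‖(inner ℂ (h w) w : ℂ)‖ = c * (c * ‖p c‖) := by
        rw [← hcu, hinner, hap]; simp [abs_of_pos hc0]
    _ ≤ 1 * (1 * ‖p c‖) := by gcongr
    _ ≤ 4 / (1 - c) := by simpa using hpc

/-- With `v = h z / ‖h z‖` and `g ω = z + δ ω v`, the holomorphic function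
`H ω = ω ⟪z, h (g ω)⟫ + δ ⟪v, h (g ω)⟫` equals `ω ⟪g ω, h (g ω)⟫` on the unit circle and
`δ ‖h z‖` at the origin; the maximum modulus principle and the bound on `⟪h w, w⟫` finish. -/
lemma norm_le_of_mem_classM (hh : h ∈ ClassM n) {r : ℝ} (hr : r < 1) {z : En n} (hz : ‖z‖ ≤ r) :
    ‖h z‖ ≤ 16 / (1 - r) ^ 2 := by
  have h1r : 0 < 1 - r := by linarith
  rcases eq_or_ne (h z) 0 with hz0 | hz0
  · rw [hz0, norm_zero]; positivity
  have hnz : 0 < ‖h z‖ := norm_pos_iff.2 hz0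
  set δ : ℝ := (1 - r) / 2 with hδ_def
  have hδ : 0 < δ := by positivity
  set v : En n := (‖h z‖ : ℂ)⁻¹ • h z
  have hv : ‖v‖ = 1 := by simp [v, norm_smul, hnz.ne']
  set g : ℂ → En n := fun ω => z + ((δ : ℂ) * ω) • v
  have hg : ∀ ω : ℂ, ‖g ω‖ ≤ r + δ * ‖ω‖ := fun ω => by
    calc ‖g ω‖ ≤ ‖z‖ + ‖((δ : ℂ) * ω) • v‖ := norm_add_le _ _
      _ ≤ r + δ * ‖ω‖ := by simp [norm_smul, hv, abs_of_pos hδ, hz]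
  have hg_mem : ∀ ω ∈ ball (0 : ℂ) 2, g ω ∈ 𝔹 n := fun ω hω => by
    rw [𝔹, mem_ball_zero_iff]
    calc ‖g ω‖ ≤ r + δ * ‖ω‖ := hg ω
      _ < r + δ * 2 := by gcongr; exact mem_ball_zero_iff.1 hω
      _ = 1 := by rw [hδ_def]; ring
  have hhg : DifferentiableOn ℂ (fun ω => h (g ω)) (ball 0 2) :=
    hh.1.comp (by fun_prop) hg_mem
  set H : ℂ → ℂ := fun ω => ω * inner ℂ z (h (g ω)) + δ * inner ℂ v (h (g ω))
  have hH : DiffContOnCl ℂ H (ball 0 1) := by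
    refine DifferentiableOn.diffContOnCl ?_
    rw [closure_ball 0 one_ne_zero]
    refine DifferentiableOn.mono ?_ (closedBall_subset_ball (by norm_num : (1 : ℝ) < 2))
    exact (differentiableOn_id.mul ((innerSL ℂ z).differentiable.comp_differentiableOn hhg)).add
      ((differentiableOn_const _).mul ((innerSL ℂ v).differentiable.comp_differentiableOn hhg))
  have hH_sphere : ∀ ω ∈ frontier (ball (0 : ℂ) 1), ‖H ω‖ ≤ 8 / (1 - r) := by
    intro ω hω
    rw [frontier_ball 0 one_ne_zero, mem_sphere_zero_iff_norm] at hω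
    have hωω : conj ω * ω = 1 := by
      rw [← Complex.normSq_eq_conj_mul_self, Complex.normSq_eq_norm_sq, hω]; norm_num
    have hHg : H ω = ω * inner ℂ (g ω) (h (g ω)) := by
      simp only [H, g, inner_add_left, inner_smul_left, map_mul, Complex.conj_ofReal]
      linear_combination (-δ * inner ℂ v (h (g ω)) : ℂ) * hωω
    have hgω : ‖g ω‖ ≤ (1 + r) / 2 := by have := hg ω; rw [hω] at this; linarith [hδ_def]
    calc ‖H ω‖ = ‖(inner ℂ (h (g ω)) (g ω) : ℂ)‖ := by
          rw [hHg, norm_mul, hω, one_mul, norm_inner_symm]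
      _ ≤ 4 / (1 - ‖g ω‖) := norm_inner_le_of_mem_classM hh (hg_mem ω (by simp [hω]))
      _ ≤ 4 / (1 - (1 + r) / 2) := by gcongr; linarith
      _ = 8 / (1 - r) := by rw [div_eq_div_iff (by linarith) h1r.ne']; ring
  have hH0 : ‖H 0‖ = δ * ‖h z‖ := by
    simp [H, g, v, inner_self_eq_norm_sq_to_K, abs_of_pos hδ, sq, hnz.ne']
  have := Complex.norm_le_of_forall_mem_frontier_norm_le isBounded_ball hH hH_sphere
    (subset_closure (mem_ball_self one_pos))
  rw [hH0] at this
  calc ‖h z‖ = (δ * ‖h z‖) / δ := by field_simp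
    _ ≤ 8 / (1 - r) / δ := by gcongr
    _ = 16 / (1 - r) ^ 2 := by field_simp; ring

lemma norm_sub_le_of_mem_classM (hh : h ∈ ClassM n) {r : ℝ} (hr : r < 1) {w w' : En n}
    (hw : ‖w‖ ≤ r) (hw' : ‖w'‖ ≤ r) : ‖h w - h w'‖ ≤ 256 / (1 - r) ^ 3 * ‖w - w'‖ := by
  have h1r : 0 < 1 - r := by linarith
  have hr' : r + (1 - r) / 2 = (1 + r) / 2 := by ring
  have hbound : ∀ y ∈ ball (0 : En n) (r + (1 - r) / 2), ‖h y‖ ≤ 64 / (1 - r) ^ 2 := by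
    intro y hy
    rw [hr', mem_ball_zero_iff] at hy
    calc ‖h y‖ ≤ 16 / (1 - (1 + r) / 2) ^ 2 := norm_le_of_mem_classM hh (by linarith) hy.le
      _ = 64 / (1 - r) ^ 2 := by rw [show 1 - (1 + r) / 2 = (1 - r) / 2 by ring]; field_simp; ring
  have hsub : ball (0 : En n) (r + (1 - r) / 2) ⊆ 𝔹 n := ball_subset_ball (by linarith)
  calc ‖h w - h w'‖ ≤ 2 * (64 / (1 - r) ^ 2) / ((1 - r) / 2) * ‖w - w'‖ :=
        norm_sub_le_of_differentiableOn_ball (by positivity) (hh.1.mono hsub) hbound hw hw'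
    _ = 256 / (1 - r) ^ 3 * ‖w - w'‖ := by field_simp; ring

end ClassM

section Evolution

variable {n : ℕ} {G : ℝ → En n → En n} {φ : ℝ → ℝ → En n → En n}

lemma IsHerglotz.ae_mem_classM (hG : IsHerglotz n G) : ∀ᵐ τ, 0 ≤ τ → G τ ∈ ClassM n :=
  (ae_restrict_iff' measurableSet_Ici).1 hG.2

lemma IsHerglotz.intervalIntegrable (hG : IsHerglotz n G) {w : En n} (hw : w ∈ 𝔹 n)
    {a b : ℝ} (ha : 0 ≤ a) (hab : a ≤ b) : IntervalIntegrable (fun τ => G τ w) volume a b := by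
  refine IntervalIntegrable.mono_fun' (g := fun _ => 16 / (1 - ‖w‖) ^ 2)
    intervalIntegrable_const (hG.1 w hw).aestronglyMeasurable ?_
  rw [uIoc_of_le hab, EventuallyLE, ae_restrict_iff' measurableSet_Ioc]
  filter_upwards [hG.ae_mem_classM] with τ hτ hτab
  exact norm_le_of_mem_classM (hτ (ha.trans hτab.1.le)) (mem_ball_zero_iff.1 hw) le_rfl

lemma IsEvolution.apply_self (hφ : IsEvolution n G φ) {s : ℝ} (hs : 0 ≤ s) {z : En n}
    (hz : z ∈ 𝔹 n) : φ s s z = z := by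
  simpa using ((hφ s hs).2 z hz).2 s le_rfl

lemma IsEvolution.eq_apply_self_add_integral (hφ : IsEvolution n G φ) {s : ℝ} (hs : 0 ≤ s)
    {z : En n} (hz : z ∈ 𝔹 n) {t : ℝ} (hst : s ≤ t) :
    φ s t z = φ s s z + ∫ σ in s..t, G σ (φ s σ z) := by
  rw [hφ.apply_self hs hz]; exact ((hφ s hs).2 z hz).2 t hst

lemma norm_evolution_le_of_intervalIntegrable (hG : IsHerglotz n G) (hφ : IsEvolution n G φ)
    {s t : ℝ} (hs : 0 ≤ s) {z : En n} (hz : z ∈ 𝔹 n)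
    (hint : IntervalIntegrable (fun τ => G τ (φ s τ z)) volume s t) :
    ∀ τ ∈ Icc s t, ‖φ s τ z‖ ≤ ‖z‖ := by
  have hmem := ((hφ s hs).2 z hz).1
  have hψ := fun τ (hτ : τ ∈ Icc s t) => hφ.eq_apply_self_add_integral hs hz hτ.1
  rcases (Icc s t).eq_empty_or_nonempty with hempty | hne
  · simp [hempty]
  obtain ⟨τ₀, hτ₀, hmax⟩ :=
    isCompact_Icc.exists_isMaxOn hne (continuousOn_of_eq_add_integral hint hψ).norm
  have hρ : ‖φ s τ₀ z‖ < 1 := mem_ball_zero_iff.1 (hmem τ₀ hτ₀.1)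
  intro τ hτ
  refine (norm_le_of_dissipative (M := 16 / (1 - ‖φ s τ₀ z‖) ^ 2) hint hψ ?_ ?_ τ hτ).trans_eq
    (by rw [hφ.apply_self hs hz])
  · filter_upwards [hG.ae_mem_classM] with σ hσ hσI
    exact norm_le_of_mem_classM (hσ (hs.trans hσI.1.le)) hρ (hmax (Ioc_subset_Icc_self hσI))
  · filter_upwards [hG.ae_mem_classM] with σ hσ hσI
    exact (hσ (hs.trans hσI.1.le)).2.2.2 _ (hmem σ hσI.1.le)

/-- The interval integral in `IsEvolution` could a priori take its junk value `0`. It does not: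
the supremum `u` of the times up to which `τ ↦ G τ (φ s τ z)` is integrable is attained, since
the trajectory stays in `closedBall 0 ‖z‖` before `u`, and past `u` it would be frozen at `z`. -/
lemma intervalIntegrable_evolution (hG : IsHerglotz n G) (hφ : IsEvolution n G φ)
    {s t : ℝ} (hs : 0 ≤ s) (hst : s ≤ t) {z : En n} (hz : z ∈ 𝔹 n) :
    IntervalIntegrable (fun τ => G τ (φ s τ z)) volume s t := by
  set S : Set ℝ := {t' ∈ Icc s t | IntervalIntegrable (fun τ => G τ (φ s τ z)) volume s t'}
  have hsS : s ∈ S := ⟨⟨le_rfl, hst⟩, IntervalIntegrable.refl⟩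
  have hSbdd : BddAbove S := ⟨t, fun _ h => h.1.2⟩
  set u := sSup S
  have hsu : s ≤ u := le_csSup hSbdd hsS
  have hut : u ≤ t := csSup_le ⟨s, hsS⟩ fun _ h => h.1.2
  have hbelow : ∀ t' ∈ Ioo s u, IntervalIntegrable (fun τ => G τ (φ s τ z)) volume s t' := by
    intro t' ht'
    obtain ⟨t'', ht''S, ht't''⟩ := exists_lt_of_lt_csSup ⟨s, hsS⟩ ht'.2
    exact ht''S.2.mono_set (uIcc_subset_uIcc left_mem_uIcc
      (Icc_subset_uIcc ⟨ht'.1.le, ht't''.le⟩))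
  have hu : IntervalIntegrable (fun τ => G τ (φ s τ z)) volume s u := by
    rcases hsu.eq_or_lt with hsu | hsu
    · rw [← hsu]
    refine intervalIntegrable_of_forall_lt (C := 16 / (1 - ‖z‖) ^ 2) hsu hbelow ?_
    filter_upwards [hG.ae_mem_classM] with τ hτ hτI
    exact norm_le_of_mem_classM (hτ (hs.trans hτI.1.le)) (mem_ball_zero_iff.1 hz)
      (norm_evolution_le_of_intervalIntegrable hG hφ hs hz (hbelow τ hτI) τ ⟨hτI.1.le, le_rfl⟩)
  rcases hut.eq_or_lt with hut | hut
  · rwa [← hut]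
  have hfrozen : ∀ τ ∈ Ioc u t, φ s τ z = z := by
    intro τ hτ
    have hnint : ¬IntervalIntegrable (fun τ => G τ (φ s τ z)) volume s τ := fun h =>
      (le_csSup hSbdd ⟨⟨hsu.trans hτ.1.le, hτ.2⟩, h⟩).not_gt hτ.1
    simpa [intervalIntegral.integral_undef hnint] using
      ((hφ s hs).2 z hz).2 τ (hsu.trans hτ.1.le)
  refine hu.trans ((hG.intervalIntegrable hz (hs.trans hsu) hut.le).congr ?_)
  rw [uIoc_of_le hut.le]
  exact fun τ hτ => congrArg (G τ) (hfrozen τ hτ).symm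

lemma norm_evolution_le (hG : IsHerglotz n G) (hφ : IsEvolution n G φ) {s t : ℝ} (hs : 0 ≤ s)
    (hst : s ≤ t) {z : En n} (hz : z ∈ 𝔹 n) : ‖φ s t z‖ ≤ ‖z‖ :=
  norm_evolution_le_of_intervalIntegrable hG hφ hs hz (intervalIntegrable_evolution hG hφ hs hst hz)
    t ⟨hst, le_rfl⟩

lemma norm_evolution_sub_le (hG : IsHerglotz n G) (hφ : IsEvolution n G φ) {s τ t : ℝ}
    (hs : 0 ≤ s) (hsτ : s ≤ τ) (hτt : τ ≤ t) {r : ℝ} (hr : r < 1) {z : En n} (hz : ‖z‖ ≤ r) :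
    ‖φ s t z - φ s τ z‖ ≤ 16 / (1 - r) ^ 2 * (t - τ) := by
  have hzB : z ∈ 𝔹 n := mem_ball_zero_iff.2 (hz.trans_lt hr)
  rw [sub_eq_integral_of_eq_add_integral (intervalIntegrable_evolution hG hφ hs (hsτ.trans hτt) hzB)
    (fun σ hσ => hφ.eq_apply_self_add_integral hs hzB hσ.1) ⟨hsτ, hτt⟩ ⟨hsτ.trans hτt, le_rfl⟩]
  refine (intervalIntegral.norm_integral_le_of_norm_le_const_ae ?_).trans_eq
    (by rw [abs_of_nonneg (sub_nonneg.2 hτt)])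
  filter_upwards [hG.ae_mem_classM] with σ hσ hσI
  rw [uIoc_of_le hτt] at hσI
  have hsσ : s ≤ σ := hsτ.trans hσI.1.le
  exact norm_le_of_mem_classM (hσ (hs.trans hsσ)) hr ((norm_evolution_le hG hφ hs hsσ hzB).trans hz)

lemma norm_average_sub_average_le (hG : IsHerglotz n G) (hφ : IsEvolution n G φ) {s T ε : ℝ}
    (hs : 0 ≤ s) (hε : 0 < ε) (hεT : s ≤ T - ε) {r : ℝ} (hr : r < 1) {z : En n} (hz : ‖z‖ ≤ r) :
    ‖(ε⁻¹ • ∫ τ in T - ε..T, G τ (φ s τ z)) - ε⁻¹ • ∫ τ in T - ε..T, G τ (φ s T z)‖ ≤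
      256 / (1 - r) ^ 3 * (16 / (1 - r) ^ 2) * ε := by
  have hzB : z ∈ 𝔹 n := mem_ball_zero_iff.2 (hz.trans_lt hr)
  have hTε : T - ε ≤ T := by linarith
  have h1r : 0 < 1 - r := sub_pos.2 hr
  have hL : 0 ≤ 256 / (1 - r) ^ 3 := by positivity
  have hM : 0 ≤ 16 / (1 - r) ^ 2 := by positivity
  have hφT : ‖φ s T z‖ ≤ r := (norm_evolution_le hG hφ hs (hεT.trans hTε) hzB).trans hz
  have hint₁ : IntervalIntegrable (fun τ => G τ (φ s τ z)) volume (T - ε) T :=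
    (intervalIntegrable_evolution hG hφ hs (hεT.trans hTε) hzB).mono_set
      (uIcc_subset_uIcc (Icc_subset_uIcc ⟨hεT, hTε⟩) right_mem_uIcc)
  have hint₂ : IntervalIntegrable (fun τ => G τ (φ s T z)) volume (T - ε) T :=
    hG.intervalIntegrable (mem_ball_zero_iff.2 (hφT.trans_lt hr)) (hs.trans hεT) hTε
  have hpt : ∀ᵐ τ, τ ∈ uIoc (T - ε) T →
      ‖G τ (φ s τ z) - G τ (φ s T z)‖ ≤ 256 / (1 - r) ^ 3 * (16 / (1 - r) ^ 2) * ε := by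
    filter_upwards [hG.ae_mem_classM] with τ hτ hτI
    rw [uIoc_of_le hTε] at hτI
    have hsτ : s ≤ τ := hεT.trans hτI.1.le
    calc ‖G τ (φ s τ z) - G τ (φ s T z)‖ ≤ 256 / (1 - r) ^ 3 * ‖φ s τ z - φ s T z‖ :=
          norm_sub_le_of_mem_classM (hτ (hs.trans hsτ)) hr
            ((norm_evolution_le hG hφ hs hsτ hzB).trans hz) hφT
      _ ≤ 256 / (1 - r) ^ 3 * (16 / (1 - r) ^ 2 * (T - τ)) := by
          rw [norm_sub_rev]; gcongr; exact norm_evolution_sub_le hG hφ hs hsτ hτI.2 hr hz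
      _ ≤ 256 / (1 - r) ^ 3 * (16 / (1 - r) ^ 2) * ε := by
          rw [← mul_assoc]; gcongr; linarith [hτI.1]
  rw [← smul_sub, ← intervalIntegral.integral_sub hint₁ hint₂, norm_smul, Real.norm_eq_abs,
    abs_inv, abs_of_pos hε]
  calc ε⁻¹ * ‖∫ τ in T - ε..T, (G τ (φ s τ z) - G τ (φ s T z))‖
      ≤ ε⁻¹ * (256 / (1 - r) ^ 3 * (16 / (1 - r) ^ 2) * ε * |T - (T - ε)|) := by
        gcongr; exact intervalIntegral.norm_integral_le_of_norm_le_const_ae hpt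
    _ = 256 / (1 - r) ^ 3 * (16 / (1 - r) ^ 2) * ε := by
        rw [sub_sub_cancel, abs_of_pos hε]; field_simp

end Evolution

/-- **Remark (Regular points along the evolution family).** -/
theorem regular_point_along_evolution {n : ℕ} (G : ℝ → En n → En n)
    (φ : ℝ → ℝ → En n → En n) (T : ℝ)
    (hG : IsHerglotz n G) (hφ : IsEvolution n G φ) (hT : RegularPoint n G T)
    (s : ℝ) (hs0 : 0 ≤ s) (hsT : s < T) :
    TendstoLocallyUniformlyOn
      (fun ε : ℝ => fun z => (ε⁻¹ : ℝ) • ∫ τ in T - ε..T, G τ (φ s τ z))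
      (fun z => G T (φ s T z)) (𝓝[>] (0 : ℝ)) (𝔹 n) := by
  have hopen : IsOpen (𝔹 n) := isOpen_ball
  rw [tendstoLocallyUniformlyOn_iff_forall_isCompact hopen]
  intro K hK hKc
  obtain ⟨r, hr, hKr⟩ := exists_lt_subset_ball hKc.isClosed hK
  have hKnorm : ∀ z ∈ K, ‖z‖ ≤ r := fun z hz => (mem_ball_zero_iff.1 (hKr hz)).le
  have hreg : TendstoUniformlyOn (fun ε z => (ε⁻¹ : ℝ) • ∫ τ in T - ε..T, G τ (φ s T z))
      (fun z => G T (φ s T z)) (𝓝[>] 0) K :=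
    (((tendstoLocallyUniformlyOn_iff_forall_isCompact hopen).1 hT.2 _
      (closedBall_subset_ball hr) (isCompact_closedBall 0 r)).comp (φ s T)).mono fun z hz =>
        mem_closedBall_zero_iff.2 ((norm_evolution_le hG hφ hs0 hsT.le (hK hz)).trans (hKnorm z hz))
  have hsmall : Tendsto (fun ε : ℝ => 256 / (1 - r) ^ 3 * (16 / (1 - r) ^ 2) * ε) (𝓝[>] 0) (𝓝 0) :=
    ((continuous_const_mul _).tendsto' 0 0 (mul_zero _)).mono_left nhdsWithin_le_nhds
  refine hreg.of_dist_le hsmall ?_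
  filter_upwards [self_mem_nhdsWithin, nhdsWithin_le_nhds (Iio_mem_nhds (sub_pos.2 hsT))]
    with ε hε hεT z hz
  rw [dist_eq_norm]
  exact norm_average_sub_average_le hG hφ hs0 hε (by linarith [mem_Iio.1 hεT]) hr (hKnorm z hz)
end
end

section
/- Let G be a Herglotz vector field in the class ℳₙ, φ_t := φ^G_{0,t}, F := f^G. Then eᵗ h(φ_t(z)) → −F(z) as t → ∞, locally uniformly with respect to z ∈ 𝔹ⁿ and uniformly with respect to h ∈ ℳₙ. Moreover, for every r ∈ (0,1) there exists a constant M_r > 0 such that ‖h(z) + z‖ ≤ M_r‖z‖² for all z with ‖z‖ ≤ r and every h ∈ ℳₙ. -/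
open Metric MeasureTheory Filter Topology Set

noncomputable section

/-! The heart of the matter is the quadratic bound. For `h ∈ ℳₙ` and `z ≠ 0`, the slope
`ζ ↦ ⟪z, h (ζ z) + ζ z⟫ / ζ` vanishes at `0` (because `dh₀ = -id`) and has real part at most
`‖z‖²` (because `Re ⟪h w, w⟫ ≤ 0`), so the Borel–Carathéodory theorem bounds the radial
component: `‖⟪z, h z + z⟫‖ ≤ 2‖z‖³ / (1 - ‖z‖)`. The maximum principle on the complex lines
`η ↦ z + η v` upgrades this to a bound on `‖h z + z‖` that is uniform on smaller balls, and
the Schwarz lemma for `h + id`, which vanishes to second order at `0`, gives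
`‖h z + z‖ ≤ M_r ‖z‖²`.

For the limit, write `w = φ_t z`; then
`eᵗ h w + F z = eᵗ (h w + w) - (eᵗ w - F z)`, and since `eᵗ ‖w‖` stays bounded on compacts,
`eᵗ ‖h w + w‖ ≤ M eᵗ ‖w‖² = O(e⁻ᵗ)` uniformly in `h`. -/

open scoped InnerProductSpace ComplexConjugate

namespace ClassM

variable {n : ℕ} {h : En n → En n}

theorem differentiableAt (hh : h ∈ ClassM n) {z : En n} (hz : z ∈ 𝔹 n) :
    DifferentiableAt ℂ h z :=
  hh.1.differentiableAt (isOpen_ball.mem_nhds hz)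

theorem hasFDerivAt_add_id (hh : h ∈ ClassM n) :
    HasFDerivAt (fun w => h w + w) (0 : En n →L[ℂ] En n) 0 := by
  have hd := (differentiableAt hh (mem_ball_self one_pos)).hasFDerivAt
  rw [hh.2.2.1] at hd
  have hsum : (-1 : En n →L[ℂ] En n) + .id ℂ (En n) = 0 := neg_add_cancel 1
  exact hsum ▸ hd.add (hasFDerivAt_id 0)

theorem differentiableAt_add_id_comp_line (hh : h ∈ ClassM n) {z v : En n} {η : ℂ}
    (hη : z + η • v ∈ 𝔹 n) :
    DifferentiableAt ℂ (fun η : ℂ => h (z + η • v) + (z + η • v)) η :=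
  ((differentiableAt hh hη).comp η (by fun_prop)).add (by fun_prop)

theorem re_inner_add_smul_div_le (hh : h ∈ ClassM n) {z : En n} {ζ : ℂ} (hζ : ζ • z ∈ 𝔹 n) :
    (⟪z, h (ζ • z) + ζ • z⟫_ℂ / ζ).re ≤ ‖z‖ ^ 2 := by
  rcases eq_or_ne ζ 0 with rfl | hζ0
  · simp
  have hζ2 : ((‖ζ‖ ^ 2 : ℝ) : ℂ) = ζ * conj ζ := by
    rw [Complex.mul_conj, Complex.normSq_eq_norm_sq, Complex.ofReal_pow]
  have hslope : ⟪z, h (ζ • z) + ζ • z⟫_ℂ / ζ =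
      ⟪ζ • z, h (ζ • z)⟫_ℂ / ((‖ζ‖ ^ 2 : ℝ) : ℂ) + ((‖z‖ ^ 2 : ℝ) : ℂ) := by
    rw [hζ2, inner_add_right, inner_smul_right, inner_smul_left, inner_self_eq_norm_sq_to_K]
    have hcζ : conj ζ ≠ 0 := (map_ne_zero _).2 hζ0
    field_simp
    norm_cast
  have hre : (⟪ζ • z, h (ζ • z)⟫_ℂ).re ≤ 0 := by
    rw [← inner_conj_symm, Complex.conj_re]
    exact hh.2.2.2 _ hζ
  rw [hslope, Complex.add_re, Complex.div_ofReal_re, Complex.ofReal_re]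
  linarith [div_nonpos_of_nonpos_of_nonneg hre (sq_nonneg ‖ζ‖)]

theorem norm_inner_add_self_le (hh : h ∈ ClassM n) {z : En n} (hz : z ∈ 𝔹 n) :
    ‖⟪z, h z + z⟫_ℂ‖ ≤ 2 * ‖z‖ ^ 3 / (1 - ‖z‖) := by
  rcases eq_or_ne z 0 with rfl | hz0
  · simp
  have hzpos : 0 < ‖z‖ := norm_pos_iff.mpr hz0
  have hz1 : ‖z‖ < 1 := mem_ball_zero_iff.mp hz
  set g : ℂ → ℂ := fun ζ => ⟪z, h (ζ • z) + ζ • z⟫_ℂ with hg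
  have hmaps : ∀ ζ ∈ ball (0 : ℂ) ‖z‖⁻¹, ζ • z ∈ 𝔹 n := fun ζ hζ => by
    rw [mem_ball_zero_iff] at hζ
    rw [𝔹, mem_ball_zero_iff, norm_smul]
    calc ‖ζ‖ * ‖z‖ < ‖z‖⁻¹ * ‖z‖ := by gcongr
      _ = 1 := inv_mul_cancel₀ hzpos.ne'
  have hgd : DifferentiableOn ℂ g (ball 0 ‖z‖⁻¹) := fun ζ hζ => by
    have hf := differentiableAt_add_id_comp_line hh (z := 0) (by simpa using hmaps ζ hζ)
    simp only [zero_add] at hf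
    exact ((innerSL ℂ z).differentiableAt.comp ζ hf).differentiableWithinAt
  have hg' : HasDerivAt g 0 0 := by
    have hline : HasDerivAt (fun ζ : ℂ => ζ • z) z 0 := by
      simpa using (hasDerivAt_id (0 : ℂ)).smul_const z
    have hf := (hasFDerivAt_add_id hh).comp_hasDerivAt_of_eq (0 : ℂ) hline (zero_smul ℂ z).symm
    have := (innerSL ℂ z).hasFDerivAt.comp_hasDerivAt (0 : ℂ) hf
    rwa [zero_apply, map_zero] at this
  set q := dslope g 0
  have hq : ∀ ζ, q ζ = g ζ / ζ := fun ζ => by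
    rcases eq_or_ne ζ 0 with rfl | hζ0
    · simp [q, dslope_same, hg'.deriv]
    · simp [q, dslope_of_ne _ hζ0, slope_def_field, hg, hh.2.1]
  have hqd : DifferentiableOn ℂ q (ball 0 ‖z‖⁻¹) :=
    (Complex.differentiableOn_dslope (ball_mem_nhds 0 (inv_pos.2 hzpos))).2 hgd
  have hqre : MapsTo q (ball 0 ‖z‖⁻¹) {w | w.re ≤ ‖z‖ ^ 2} := fun ζ hζ => by
    rw [mem_ofPred_eq, hq]
    exact re_inner_add_smul_div_le hh (hmaps ζ hζ)
  have hbc := Complex.borelCaratheodory_zero (pow_pos hzpos 2) hqd hqre (inv_pos.2 hzpos)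
    (z := 1) (by simpa using one_lt_inv₀ hzpos |>.2 hz1) (by simp [hq])
  simp only [hq, div_one, hg, one_smul, norm_one] at hbc
  calc ‖⟪z, h z + z⟫_ℂ‖ ≤ 2 * ‖z‖ ^ 2 * 1 / (‖z‖⁻¹ - 1) := hbc
    _ = 2 * ‖z‖ ^ 3 / (1 - ‖z‖) := by field_simp

theorem norm_inner_add_self_le_of_norm_le (hh : h ∈ ClassM n) {z : En n} {σ : ℝ}
    (hzσ : ‖z‖ ≤ σ) (hσ : σ < 1) : ‖⟪z, h z + z⟫_ℂ‖ ≤ 2 / (1 - σ) := by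
  have hz1 : ‖z‖ < 1 := hzσ.trans_lt hσ
  calc ‖⟪z, h z + z⟫_ℂ‖ ≤ 2 * ‖z‖ ^ 3 / (1 - ‖z‖) :=
        norm_inner_add_self_le hh (mem_ball_zero_iff.2 hz1)
    _ ≤ 2 * 1 / (1 - σ) := by
        gcongr
        exact pow_le_one₀ (norm_nonneg _) hz1.le
    _ = 2 / (1 - σ) := by ring

theorem norm_inner_add_self_le_of_norm_le_one (hh : h ∈ ClassM n) {z v : En n} (hv : ‖v‖ ≤ 1)
    {ε σ : ℝ} (hε : 0 < ε) (hzσ : ‖z‖ + ε ≤ σ) (hσ : σ < 1) :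
    ‖⟪v, h z + z⟫_ℂ‖ ≤ 2 / (ε * (1 - σ)) := by
  set f : En n → En n := fun x => h x + x
  have hw : ∀ η ∈ closedBall (0 : ℂ) ε, ‖z + η • v‖ ≤ σ := fun η hη => by
    rw [mem_closedBall_zero_iff] at hη
    calc ‖z + η • v‖ ≤ ‖z‖ + ‖η‖ * ‖v‖ := (norm_add_le _ _).trans_eq (by rw [norm_smul])
      _ ≤ ‖z‖ + ε * 1 := by gcongr
      _ ≤ σ := by linarith
  -- On `‖η‖ = ε` we have `ε ^ 2 = η * conj η`, so `Ψ η = η * ⟪w, f w⟫` with `w = z + η • v`,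
  -- which the radial bound controls; the maximum principle then bounds `Ψ 0 = ε ^ 2 * ⟪v, f z⟫`.
  set Ψ : ℂ → ℂ := fun η =>
    η * ⟪z, f (z + η • v)⟫_ℂ + ((ε ^ 2 : ℝ) : ℂ) * ⟪v, f (z + η • v)⟫_ℂ
  have hΨd : DifferentiableOn ℂ Ψ (closedBall 0 ε) := fun η hη => by
    have hf := differentiableAt_add_id_comp_line hh
      (mem_ball_zero_iff.2 ((hw η hη).trans_lt hσ))
    exact (differentiableAt_id.mul ((innerSL ℂ z).differentiableAt.comp η hf)).add
      ((differentiableAt_const _).mul ((innerSL ℂ v).differentiableAt.comp η hf))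
      |>.differentiableWithinAt
  have hfr : ∀ η ∈ frontier (ball (0 : ℂ) ε), ‖Ψ η‖ ≤ ε * (2 / (1 - σ)) := fun η hη => by
    rw [frontier_ball 0 hε.ne', mem_sphere_zero_iff_norm] at hη
    have hε2 : ((ε ^ 2 : ℝ) : ℂ) = η * conj η := by
      rw [← hη, Complex.mul_conj, Complex.normSq_eq_norm_sq]
    have hΨη : Ψ η = η * ⟪z + η • v, f (z + η • v)⟫_ℂ := by
      simp only [Ψ, hε2, inner_add_left, inner_smul_left]
      ring
    rw [hΨη, norm_mul, hη]
    gcongr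
    exact norm_inner_add_self_le_of_norm_le hh (hw η (mem_closedBall_zero_iff.2 hη.le)) hσ
  have hmax := Complex.norm_le_of_forall_mem_frontier_norm_le isBounded_ball
    (hΨd.diffContOnCl_ball subset_rfl) hfr (subset_closure (mem_ball_self hε))
  simp only [Ψ, zero_mul, zero_add, zero_smul, add_zero, norm_mul, Complex.norm_real,
    Real.norm_of_nonneg (sq_nonneg ε)] at hmax
  have h1σ : 0 < 1 - σ := by linarith
  rw [le_div_iff₀ (by positivity)]
  calc ‖⟪v, f z⟫_ℂ‖ * (ε * (1 - σ)) = ε⁻¹ * (ε ^ 2 * ‖⟪v, f z⟫_ℂ‖ * (1 - σ)) := by field_simp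
    _ ≤ ε⁻¹ * (ε * (2 / (1 - σ)) * (1 - σ)) := by gcongr
    _ = 2 := by field_simp

theorem norm_add_self_le (hh : h ∈ ClassM n) {z : En n} {ε σ : ℝ} (hε : 0 < ε)
    (hzσ : ‖z‖ + ε ≤ σ) (hσ : σ < 1) : ‖h z + z‖ ≤ 2 / (ε * (1 - σ)) := by
  set v : En n := ((‖h z + z‖⁻¹ : ℝ) : ℂ) • (h z + z)
  have hv : ‖v‖ ≤ 1 := by
    rw [norm_smul, Complex.norm_real, norm_inv, norm_norm]
    exact inv_mul_le_one_of_le₀ le_rfl (norm_nonneg _)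
  have hvf : ⟪v, h z + z⟫_ℂ = ‖h z + z‖ := by
    rw [inner_smul_left, Complex.conj_ofReal, inner_self_eq_norm_sq_to_K]
    push_cast
    rw [sq, ← mul_assoc]
    exact inv_mul_mul_self _
  simpa [hvf] using norm_inner_add_self_le_of_norm_le_one hh hv hε hzσ hσ

theorem exists_norm_add_self_le_sq {r : ℝ} (hr0 : 0 < r) (hr1 : r < 1) :
    ∃ M : ℝ, 0 < M ∧ ∀ h ∈ ClassM n, ∀ z : En n, ‖z‖ ≤ r → ‖h z + z‖ ≤ M * ‖z‖ ^ 2 := by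
  set ρ := (1 + r) / 2 with hρ
  obtain ⟨C, hC0, hC⟩ : ∃ C > 0, ∀ h ∈ ClassM n, ∀ w : En n, ‖w‖ < ρ → ‖h w + w‖ ≤ C :=
    ⟨2 / ((1 - r) / 4 * (1 - (3 + r) / 4)), div_pos two_pos (mul_pos (by linarith) (by linarith)),
      fun h hh w hw => norm_add_self_le hh (by linarith) (by linarith) (by linarith)⟩
  refine ⟨C / ρ ^ 2, by positivity, fun h hh z hz => ?_⟩
  have hmaps : MapsTo (fun w => h w + w) (ball 0 ρ) (closedBall (h 0 + 0) C) := fun w hw => by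
    rw [hh.2.1, add_zero, mem_closedBall_zero_iff]
    exact hC h hh w (mem_ball_zero_iff.1 hw)
  have hd : DifferentiableOn ℂ (fun w => h w + w) (ball 0 ρ) := fun w hw =>
    ((differentiableAt hh (ball_subset_ball (by linarith) hw)).add
      differentiableAt_id).differentiableWithinAt
  have hlo : ((fun w => h w + w) · - (h 0 + 0)) =o[𝓝 0] (fun w => ‖w - 0‖ ^ 1) := by
    simpa using (hasFDerivAt_add_id hh).isLittleO.norm_right
  have hschwarz := Complex.dist_le_mul_div_pow_of_mapsTo_ball_of_isLittleO hd hmaps hlo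
    (mem_ball_zero_iff.2 (by linarith : ‖z‖ < ρ))
  rw [hh.2.1, add_zero, dist_zero_right, dist_zero_right] at hschwarz
  calc ‖h z + z‖ ≤ C * (‖z‖ / ρ) ^ 2 := hschwarz
    _ = C / ρ ^ 2 * ‖z‖ ^ 2 := by rw [div_pow]; ring

end ClassM

theorem eventually_norm_exp_smul_comp_add_lt {X E : Type*} [NormedAddCommGroup E]
    [NormedSpace ℝ E] {𝓗 : Set (E → E)} {M ρ : ℝ} (hρ : 0 < ρ) (hM : 0 ≤ M)
    (hquad : ∀ h ∈ 𝓗, ∀ w : E, ‖w‖ ≤ ρ → ‖h w + w‖ ≤ M * ‖w‖ ^ 2)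
    {a : ℝ → X → E} {F : X → E} {K : Set X}
    (ha : TendstoUniformlyOn (fun t z => Real.exp t • a t z) F atTop K)
    {C : ℝ} (hF : ∀ z ∈ K, ‖F z‖ ≤ C) {δ : ℝ} (hδ : 0 < δ) :
    ∀ᶠ t in atTop, ∀ h ∈ 𝓗, ∀ z ∈ K, ‖Real.exp t • h (a t z) + F z‖ < δ := by
  have hconv : ∀ᶠ t in atTop, ∀ z ∈ K, ‖Real.exp t • a t z - F z‖ < min (δ / 2) 1 := by
    filter_upwards [Metric.tendstoUniformlyOn_iff.1 ha _ (lt_min (half_pos hδ) one_pos)]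
      with t ht z hz
    rw [← dist_eq_norm, dist_comm]
    exact ht z hz
  have hdecay (c : ℝ) : Tendsto (fun t => c * Real.exp (-t)) atTop (𝓝 0) := by
    simpa using Real.tendsto_exp_neg_atTop_nhds_zero.const_mul c
  filter_upwards [hconv, (hdecay (C + 1)).eventually (ge_mem_nhds hρ),
    (hdecay (M * (C + 1) ^ 2)).eventually (gt_mem_nhds (half_pos hδ))]
    with t hclose hsmall hdecayed h hh z hz
  set w := a t z
  have hnorm : ‖Real.exp t • w‖ = Real.exp t * ‖w‖ := by
    rw [norm_smul, Real.norm_of_nonneg (Real.exp_pos t).le]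
  have hscaled : Real.exp t * ‖w‖ ≤ C + 1 := by
    have := norm_le_norm_sub_add (Real.exp t • w) (F z)
    linarith [hclose z hz |>.trans_le (min_le_right _ _), hF z hz]
  have hw : ‖w‖ ≤ (C + 1) * Real.exp (-t) := by
    calc ‖w‖ = Real.exp (-t) * (Real.exp t * ‖w‖) := by
          rw [← mul_assoc, ← Real.exp_add, neg_add_cancel, Real.exp_zero, one_mul]
      _ ≤ Real.exp (-t) * (C + 1) := by gcongr
      _ = (C + 1) * Real.exp (-t) := mul_comm _ _
  calc ‖Real.exp t • h w + F z‖ = ‖Real.exp t • (h w + w) - (Real.exp t • w - F z)‖ := by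
        congr 1; module
    _ ≤ Real.exp t * ‖h w + w‖ + ‖Real.exp t • w - F z‖ :=
        (norm_sub_le _ _).trans_eq (by rw [norm_smul, Real.norm_of_nonneg (Real.exp_pos t).le])
    _ ≤ Real.exp t * (M * ‖w‖ ^ 2) + ‖Real.exp t • w - F z‖ := by
        gcongr
        exact hquad h hh w (hw.trans hsmall)
    _ = M * (Real.exp t * ‖w‖) ^ 2 * Real.exp (-t) + ‖Real.exp t • w - F z‖ := by
        rw [Real.exp_neg]
        field_simp
    _ ≤ M * (C + 1) ^ 2 * Real.exp (-t) + ‖Real.exp t • w - F z‖ := by gcongr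
    _ < δ / 2 + δ / 2 := add_lt_add hdecayed (hclose z hz |>.trans_le (min_le_left _ _))
    _ = δ := add_halves δ

theorem exp_h_phi_tendsto_neg_F_general {n : ℕ} (G : ℝ → En n → En n)
    (φ : ℝ → ℝ → En n → En n) (F : En n → En n)
    (hφ : IsEvolution n G φ) (hF : IsLoewnerLimit n φ 0 F) :
    (∀ K : Set (En n), K ⊆ 𝔹 n → IsCompact K → ∀ δ : ℝ, 0 < δ →
      ∀ᶠ t in (atTop : Filter ℝ), ∀ h ∈ ClassM n, ∀ z ∈ K,
        ‖Real.exp t • h (φ 0 t z) + F z‖ < δ) ∧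
    (∀ r : ℝ, 0 < r → r < 1 → ∃ M : ℝ, 0 < M ∧
      ∀ h ∈ ClassM n, ∀ z : En n, ‖z‖ ≤ r → ‖h z + z‖ ≤ M * ‖z‖ ^ 2) := by
  refine ⟨fun K hK hKc δ hδ => ?_, fun r hr0 hr1 => ClassM.exists_norm_add_self_le_sq hr0 hr1⟩
  obtain ⟨M, hM, hquad⟩ :=
    ClassM.exists_norm_add_self_le_sq (n := n) (r := 1 / 2) (by norm_num) (by norm_num)
  have hcont : ∀ᶠ t in atTop, ContinuousOn (fun z => Real.exp t • φ 0 t z) (𝔹 n) := by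
    filter_upwards [eventually_ge_atTop 0] with t ht
    exact ((hφ 0 le_rfl).1 t ht).continuousOn.const_smul (Real.exp t)
  obtain ⟨C, hC⟩ :=
    hKc.exists_bound_of_continuousOn ((hF.continuousOn hcont.frequently).mono hK)
  exact eventually_norm_exp_smul_comp_add_lt (by norm_num) hM.le hquad
    ((tendstoLocallyUniformlyOn_iff_forall_isCompact isOpen_ball).1 hF K hK hKc) hC hδ

/-- **Lemma: `eᵗ h(φ_t(z)) → −F(z)` locally uniformly in `z`, uniformly in `h ∈ ℳₙ`;
and the uniform quadratic bound `‖h(z)+z‖ ≤ M_r‖z‖²` on `‖z‖ ≤ r`.** -/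
theorem exp_h_phi_tendsto_neg_F {n : ℕ} (G : ℝ → En n → En n)
    (φ : ℝ → ℝ → En n → En n) (F : En n → En n)
    (hG : IsHerglotz n G) (hφ : IsEvolution n G φ) (hF : IsLoewnerLimit n φ 0 F) :
    (∀ K : Set (En n), K ⊆ 𝔹 n → IsCompact K → ∀ δ : ℝ, 0 < δ →
      ∀ᶠ t in (atTop : Filter ℝ), ∀ h ∈ ClassM n, ∀ z ∈ K,
        ‖Real.exp t • h (φ 0 t z) + F z‖ < δ) ∧
    (∀ r : ℝ, 0 < r → r < 1 → ∃ M : ℝ, 0 < M ∧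
      ∀ h ∈ ClassM n, ∀ z : En n, ‖z‖ ≤ r → ‖h z + z‖ ≤ M * ‖z‖ ^ 2) :=
  exp_h_phi_tendsto_neg_F_general G φ F hφ hF
end
end
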